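/- Let J_1 ⊆ 𝒜_{m_1} and J_2 ⊆ 𝒜_{m_2} be proper ideals. Then corank(J_1 ⊞ J_2) = corank(J_1) + corank(J_2), where the corank of J_1 ⊞ J_2 is computed in 𝒜_{m_1+m_2}. -/

import Mathlib

open MvPowerSeries

/-- `𝒜 m` : formal power series in `m` variables over `ℂ`, the algebraic model for the
local ring of germs of differentiable functions at the origin of `ℂ^m`. -/
abbrev Amod (m : ℕ) : Type := MvPowerSeries (Fin m) ℂ

/-- Formal partial derivative `∂/∂x_j` of a multivariate power series. -/
noncomputable def pd {m : ℕ} (j : Fin m) (φ : Amod m) : Amod m :=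
  fun e => ((e j + 1 : ℕ) : ℂ) * MvPowerSeries.coeff (e + Finsupp.single j 1) φ

/-- The differential at the origin: the vector of degree-one coefficients. -/
noncomputable def diffAtZero {m : ℕ} (φ : Amod m) : Fin m → ℂ :=
  fun j => MvPowerSeries.coeff (Finsupp.single j 1) φ

/-- The rank of an ideal `B ⊆ 𝒜 m`: the dimension of the `ℂ`-linear span of the
differentials at `0` of the elements of `B`. -/
noncomputable def rankIdeal {m : ℕ} (B : Ideal (Amod m)) : ℕ :=
  Module.finrank ℂ (Submodule.span ℂ (diffAtZero '' (B : Set (Amod m))))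

/-- The corank of an ideal `B ⊆ 𝒜 m`. -/
noncomputable def corankIdeal {m : ℕ} (B : Ideal (Amod m)) : ℕ := m - rankIdeal B

/-- The Jacobian extension `Δ_k B` (lower index): the ideal generated by `B` together with
all `k × k` minors of Jacobian matrices of `k`-tuples of elements of `B`; for `k > m` it
is `B` itself. -/
noncomputable def jacExt {m : ℕ} (k : ℕ) (B : Ideal (Amod m)) : Ideal (Amod m) :=
  if m < k then B
  else B ⊔ Ideal.span { f | ∃ φ : Fin k → Amod m, (∀ i, φ i ∈ B) ∧
    ∃ j : Fin k → Fin m, StrictMono j ∧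
      f = Matrix.det (Matrix.of fun i l => pd (j l) (φ i)) }

/-- Jacobian extension with upper index: `Δ^i B = Δ_{m-i+1} B`. -/
noncomputable def jacExtUpper {m : ℕ} (i : ℕ) (B : Ideal (Amod m)) : Ideal (Amod m) :=
  jacExt (m - i + 1) B

/-- The iterated critical extensions `TBiter J p = Δ^{i_p} ⋯ Δ^{i_1} J`. -/
noncomputable def TBiter {m : ℕ} (J : Ideal (Amod m)) : ℕ → Ideal (Amod m)
  | 0 => J
  | p + 1 => jacExtUpper (corankIdeal (TBiter J p)) (TBiter J p)

/-- The Thom–Boardman symbol, `0`-indexed: `TB J p` is the `(p+1)`-st entry `i_{p+1}`,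
i.e. `TB J 0 = corank J` and `TB J p = corank (Δ^{i_p} ⋯ Δ^{i_1} J)`. -/
noncomputable def TB {m : ℕ} (J : Ideal (Amod m)) (p : ℕ) : ℕ :=
  corankIdeal (TBiter J p)

/-- Coefficient `a_i` of the generic monic polynomial of degree `n`
(the first block of `n` variables of `𝒜 (n+r)`), with `a_n = 1` and `a_i = 0` for `i > n`. -/
noncomputable def aCoef (n r i : ℕ) : Amod (n + r) :=
  if h : i < n then MvPowerSeries.X (Fin.castAdd r ⟨i, h⟩)
  else if i = n then 1 else 0

/-- Coefficient `b_j` of the generic monic polynomial of degree `r`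
(the last block of `r` variables of `𝒜 (n+r)`), with `b_r = 1` and `b_j = 0` for `j > r`. -/
noncomputable def bCoef (n r j : ℕ) : Amod (n + r) :=
  if h : j < r then MvPowerSeries.X (Fin.natAdd n ⟨j, h⟩)
  else if j = r then 1 else 0

/-- Coefficient `c_k` of the product `(x^n + Σ_{i<n} a_i x^i) (x^r + Σ_{j<r} b_j x^j)`. -/
noncomputable def cCoef (n r k : ℕ) : Amod (n + r) :=
  ∑ p ∈ Finset.HasAntidiagonal.antidiagonal k, aCoef n r p.1 * bCoef n r p.2

/-- The ideal `I(μ_{n,r}) ⊆ 𝒜 (n+r)` of the polynomial multiplication map `μ_{n,r}`,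
generated by `c_0, …, c_{n+r-1}`. -/
noncomputable def muIdeal (n r : ℕ) : Ideal (Amod (n + r)) :=
  Ideal.span (Set.range fun k : Fin (n + r) => cCoef n r (k : ℕ))

/-- The sequence `I(n,r)` given by the Euclidean algorithm on `n` and `r` (0-indexed):
`r` repeated `n / r` times, then `r₁ = n % r` repeated `r / r₁` times, …, followed by zeros. -/
def euclidSeq (n r p : ℕ) : ℕ :=
  if h : r = 0 then 0
  else if p < n / r then r
  else euclidSeq r (n % r) (p - n / r)
termination_by r
decreasing_by exact Nat.mod_lt _ (Nat.pos_of_ne_zero h)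

/-- The `ℂ`-algebra embedding `𝒜 m₁ → 𝒜 (m₁+m₂)` using the first `m₁` variables. -/
noncomputable def embL {m₁ m₂ : ℕ} (φ : Amod m₁) : Amod (m₁ + m₂) :=
  fun e =>
    if ∀ j : Fin m₂, e (Fin.natAdd m₁ j) = 0 then
      MvPowerSeries.coeff (Finsupp.equivFunOnFinite.symm fun i => e (Fin.castAdd m₂ i)) φ
    else 0

/-- The `ℂ`-algebra embedding `𝒜 m₂ → 𝒜 (m₁+m₂)` using the last `m₂` variables. -/
noncomputable def embR {m₁ m₂ : ℕ} (φ : Amod m₂) : Amod (m₁ + m₂) :=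
  fun e =>
    if ∀ i : Fin m₁, e (Fin.castAdd m₂ i) = 0 then
      MvPowerSeries.coeff (Finsupp.equivFunOnFinite.symm fun j => e (Fin.natAdd m₁ j)) φ
    else 0

/-- The product ideal `J₁ ⊞ J₂ ⊆ 𝒜 (m₁+m₂)`, generated by the images of `J₁` and `J₂`
under the two embeddings; it models the ideal of the Cartesian product of two map-germs. -/
noncomputable def prodIdeal {m₁ m₂ : ℕ} (J₁ : Ideal (Amod m₁)) (J₂ : Ideal (Amod m₂)) :
    Ideal (Amod (m₁ + m₂)) :=
  Ideal.span (embL '' (J₁ : Set (Amod m₁)) ∪ embR '' (J₂ : Set (Amod m₂)))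

/-!
By the Leibniz rule the differential at the origin satisfies `d(aφ) = a(0) • dφ` whenever
`φ(0) = 0`, so the differentials of an ideal generated by series without constant term span the
same space as the differentials of the generators. Properness puts `J₁` and `J₂` in the maximal
ideals, and the generators of `J₁ ⊞ J₂` have differentials `(dφ₁, 0)` and `(0, dφ₂)`; the span for
`J₁ ⊞ J₂` is therefore the product of the spans for `J₁` and `J₂`, and ranks, hence coranks, add.
-/

def Fin.appendLinearEquiv (R M : Type*) [Semiring R] [AddCommMonoid M] [Module R M] (m n : ℕ) :
    ((Fin m → M) × (Fin n → M)) ≃ₗ[R] (Fin (m + n) → M) where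
  __ := Fin.appendEquiv m n
  map_add' _ _ := by
    funext j
    refine Fin.addCases (fun i => ?_) (fun i => ?_) j <;> simp
  map_smul' _ _ := by
    funext j
    refine Fin.addCases (fun i => ?_) (fun i => ?_) j <;> simp

@[simp]
theorem Fin.appendLinearEquiv_apply (R M : Type*) [Semiring R] [AddCommMonoid M] [Module R M]
    {m n : ℕ} (v : Fin m → M) (w : Fin n → M) :
    Fin.appendLinearEquiv R M m n (v, w) = Fin.append v w :=
  rfl

theorem Submodule.finrank_prod {K M N : Type*} [DivisionRing K] [AddCommGroup M] [Module K M]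
    [AddCommGroup N] [Module K N] (p : Submodule K M) (q : Submodule K N)
    [FiniteDimensional K p] [FiniteDimensional K q] :
    Module.finrank K (p.prod q) = Module.finrank K p + Module.finrank K q := by
  have hinj : Function.Injective (p.subtype.prodMap q.subtype) :=
    Prod.map_injective.2 ⟨p.injective_subtype, q.injective_subtype⟩
  rw [← p.range_subtype, ← q.range_subtype, ← LinearMap.range_prodMap,
    LinearMap.finrank_range_of_inj hinj, Module.finrank_prod, p.range_subtype, q.range_subtype]

theorem MvPowerSeries.constantCoeff_eq_zero_of_mem {σ k : Type*} [Field k]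
    {J : Ideal (MvPowerSeries σ k)} (hJ : J ≠ ⊤) {φ : MvPowerSeries σ k} (hφ : φ ∈ J) :
    constantCoeff φ = 0 := by
  by_contra h
  exact hJ (Ideal.eq_top_of_isUnit_mem _ hφ (isUnit_iff_constantCoeff.2 (isUnit_iff_ne_zero.2 h)))

section Differential

variable {m : ℕ}

theorem diffAtZero_zero : diffAtZero (0 : Amod m) = 0 := by
  funext j; simp [diffAtZero]

theorem diffAtZero_add (φ ψ : Amod m) : diffAtZero (φ + ψ) = diffAtZero φ + diffAtZero ψ := by
  funext j; simp [diffAtZero]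

theorem diffAtZero_mul (φ ψ : Amod m) :
    diffAtZero (φ * ψ) = constantCoeff φ • diffAtZero ψ + constantCoeff ψ • diffAtZero φ := by
  funext j
  rw [diffAtZero, coeff_mul, Finsupp.antidiagonal_single, Finset.sum_map]
  simp [show Finset.HasAntidiagonal.antidiagonal 1 = {((0 : ℕ), 1), (1, 0)} from rfl,
    diffAtZero, mul_comm]

theorem span_diffAtZero_ideal_span {S : Set (Amod m)} (hS : ∀ s ∈ S, constantCoeff s = 0) :
    Submodule.span ℂ (diffAtZero '' (Ideal.span S : Set (Amod m))) =
      Submodule.span ℂ (diffAtZero '' S) := by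
  refine le_antisymm (Submodule.span_le.2 ?_)
    (Submodule.span_mono (Set.image_mono Ideal.subset_span))
  have hmax : Ideal.span S ≤ RingHom.ker (constantCoeff (σ := Fin m) (R := ℂ)) :=
    Ideal.span_le.2 hS
  rintro _ ⟨φ, hφ, rfl⟩
  induction hφ using Submodule.span_induction with
  | mem s hs => exact Submodule.subset_span ⟨s, hs, rfl⟩
  | zero => rw [diffAtZero_zero]; exact Submodule.zero_mem _
  | add φ ψ _ _ hφ hψ => rw [diffAtZero_add]; exact Submodule.add_mem _ hφ hψ
  | smul a φ hφS hφ =>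
    rw [smul_eq_mul, diffAtZero_mul, RingHom.mem_ker.1 (hmax hφS), zero_smul, add_zero]
    exact Submodule.smul_mem _ _ hφ

theorem rankIdeal_le (B : Ideal (Amod m)) : rankIdeal B ≤ m :=
  (Submodule.finrank_le _).trans_eq (Module.finrank_fin_fun ℂ)

end Differential

section Embeddings

variable {m₁ m₂ : ℕ}

theorem constantCoeff_embL (φ : Amod m₁) :
    constantCoeff (embL (m₂ := m₂) φ) = constantCoeff φ := by
  rw [← coeff_zero_eq_constantCoeff_apply, ← coeff_zero_eq_constantCoeff_apply, coeff_apply]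
  simp only [embL, Finsupp.coe_zero, Pi.zero_apply, implies_true, if_true]
  congr 2
  ext; rfl

theorem constantCoeff_embR (φ : Amod m₂) :
    constantCoeff (embR (m₁ := m₁) φ) = constantCoeff φ := by
  rw [← coeff_zero_eq_constantCoeff_apply, ← coeff_zero_eq_constantCoeff_apply, coeff_apply]
  simp only [embR, Finsupp.coe_zero, Pi.zero_apply, implies_true, if_true]
  congr 2
  ext; rfl

theorem diffAtZero_embL (φ : Amod m₁) :
    diffAtZero (embL (m₂ := m₂) φ) = Fin.appendLinearEquiv ℂ ℂ m₁ m₂ (diffAtZero φ, 0) := by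
  funext j
  refine Fin.addCases (fun i => ?_) (fun i => ?_) j
  · have hsupp (k : Fin m₂) : Finsupp.single (Fin.castAdd m₂ i) 1 (Fin.natAdd m₁ k) = 0 :=
      Finsupp.single_eq_of_ne (by simp [Fin.ext_iff]; omega)
    simp [diffAtZero, embL, coeff_apply, hsupp,
      Finsupp.single_apply_left (Fin.castAdd_injective m₁ m₂), Finsupp.equivFunOnFinite_symm_coe]
  · simp [diffAtZero, embL, coeff_apply, Finsupp.single_apply]

theorem diffAtZero_embR (φ : Amod m₂) :
    diffAtZero (embR (m₁ := m₁) φ) = Fin.appendLinearEquiv ℂ ℂ m₁ m₂ (0, diffAtZero φ) := by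
  funext j
  refine Fin.addCases (fun i => ?_) (fun i => ?_) j
  · simp [diffAtZero, embR, coeff_apply, Finsupp.single_apply]
  · have hsupp (k : Fin m₁) : Finsupp.single (Fin.natAdd m₁ i) 1 (Fin.castAdd m₂ k) = 0 :=
      Finsupp.single_eq_of_ne (by simp [Fin.ext_iff]; omega)
    simp [diffAtZero, embR, coeff_apply, hsupp,
      Finsupp.single_apply_left (Fin.natAdd_injective m₂ m₁), Finsupp.equivFunOnFinite_symm_coe]

theorem rankIdeal_prodIdeal {J₁ : Ideal (Amod m₁)} {J₂ : Ideal (Amod m₂)} (h₁ : J₁ ≠ ⊤)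
    (h₂ : J₂ ≠ ⊤) : rankIdeal (prodIdeal J₁ J₂) = rankIdeal J₁ + rankIdeal J₂ := by
  have hS : ∀ s ∈ embL '' (J₁ : Set (Amod m₁)) ∪ embR '' (J₂ : Set (Amod m₂)),
      constantCoeff s = 0 := by
    rintro _ (⟨φ, hφ, rfl⟩ | ⟨φ, hφ, rfl⟩)
    · rw [constantCoeff_embL]; exact constantCoeff_eq_zero_of_mem h₁ hφ
    · rw [constantCoeff_embR]; exact constantCoeff_eq_zero_of_mem h₂ hφ
  have himage : diffAtZero '' (embL '' (J₁ : Set (Amod m₁)) ∪ embR '' (J₂ : Set (Amod m₂))) =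
      Fin.appendLinearEquiv ℂ ℂ m₁ m₂ '' (LinearMap.inl ℂ _ _ '' (diffAtZero '' J₁) ∪
        LinearMap.inr ℂ _ _ '' (diffAtZero '' J₂)) := by
    simp only [Set.image_union, Set.image_image, diffAtZero_embL, diffAtZero_embR,
      LinearMap.inl_apply, LinearMap.inr_apply]
  rw [rankIdeal, prodIdeal, span_diffAtZero_ideal_span hS, himage,
    Submodule.span_image_linearEquiv, LinearMap.span_inl_union_inr, LinearEquiv.finrank_map_eq,
    Submodule.finrank_prod]
  rfl

end Embeddings

/-- **Additivity of corank under Cartesian product.** If `J₁ ⊆ 𝒜 m₁` and `J₂ ⊆ 𝒜 m₂` are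
proper ideals, then `corank (J₁ ⊞ J₂) = corank J₁ + corank J₂` in `𝒜 (m₁+m₂)`. -/
theorem corank_prodIdeal_add (m₁ m₂ : ℕ) (J₁ : Ideal (Amod m₁)) (J₂ : Ideal (Amod m₂))
    (h₁ : J₁ ≠ ⊤) (h₂ : J₂ ≠ ⊤) :
    corankIdeal (prodIdeal J₁ J₂) = corankIdeal J₁ + corankIdeal J₂ := by
  have hr₁ := rankIdeal_le J₁
  have hr₂ := rankIdeal_le J₂
  rw [corankIdeal, corankIdeal, corankIdeal, rankIdeal_prodIdeal h₁ h₂]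
  omega
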